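/- Let q = p^e, p > 3 prime, and let f(y) = [((k−1)−(k−2)y)·y^n − (1+(k−2)y)·(1−y)^n]/(2y−1) be defined on (F_q ∪ V)∖{1/2}, where V = {x ∈ F_{q²} : x^q = 1−x}. Then D_{n,k}(1,x) is a permutation polynomial of F_q if and only if f is 2-to-1 on (F_q ∪ V)∖{1/2} and f(y) ≠ (kn−k+2)/2^n for every y in (F_q ∪ V)∖{1/2}. -/

import Mathlib

/-!
The map `y ↦ y (1 - y)` sends `F_q ∪ V` onto `F_q`: for `x ∈ F_q` the roots of `Y² - Y + x`
lie in `F_{q²}` and are either both in `F_q` or swapped by Frobenius, i.e. `y ^ q = 1 - y`. Its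
fibres are the pairs `{y, 1 - y}`, and `1/2` is the only point over `1/4`. The recurrence
`D_{n+2} = D_{n+1} - x D_n` gives `(2y - 1) D_{n,k}(1, y (1 - y)) = (2y - 1) f(y)`, so away from
`1/2` the function `f` is `D_{n,k}(1, ·)` composed with this map. Hence injectivity of
`D_{n,k}(1, ·)` on `F_q` splits into injectivity on `F_q ∖ {1/4}`, which is the 2-to-1 condition,
and the value `D_{n,k}(1, 1/4) = (kn - k + 2)/2^n` not being taken elsewhere.
-/

open Finset

/-- The `n`-th reversed Dickson polynomial of the `(k+1)`-th kind, evaluated at `(a, x)`.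
For `n ≥ 1` it is `∑_{i=0}^{⌊n/2⌋} ((n-ki)/(n-i))·C(n-i,i)·(-x)^i·a^{n-2i}`, where the
integer coefficient `((n-ki)/(n-i))·C(n-i,i)` is written as
`k·C(n-i,i) - (k-1)·(n/(n-i))·C(n-i,i)` and `(n/(n-i))·C(n-i,i) = C(n-i,i) + C(n-i-1,i-1)`
(equal to `1` when `i = 0`). For `n = 0` it is `2 - k`. -/
noncomputable def revDickson {F : Type*} [Field F] (k : ℤ) (n : ℕ) (a x : F) : F :=
  if n = 0 then ((2 - k : ℤ) : F) else
    ∑ i ∈ Finset.range (n / 2 + 1),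
      ((k * ((n - i).choose i : ℤ) -
          (k - 1) * (if i = 0 then 1 else ((n - i).choose i : ℤ) + ((n - i - 1).choose (i - 1) : ℤ))) : F)
        * (-x) ^ i * a ^ (n - 2 * i)

def revDicksonCoeff (k : ℤ) (n i : ℕ) : ℤ :=
  k * ((n - i).choose i : ℤ) -
    (k - 1) * (if i = 0 then 1 else ((n - i).choose i : ℤ) + ((n - i - 1).choose (i - 1) : ℤ))

section revDickson

variable {F : Type*} [Field F] (k : ℤ)

lemma revDicksonCoeff_zero (n : ℕ) : revDicksonCoeff k n 0 = 1 := by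
  simp [revDicksonCoeff]

-- `2 ≤ n` is needed: with truncated subtraction, `revDicksonCoeff k 1 1 = 1 - k`.
lemma revDicksonCoeff_eq_zero {n i : ℕ} (hn : 2 ≤ n) (hi : n / 2 < i) :
    revDicksonCoeff k n i = 0 := by
  have h₁ : (n - i).choose i = 0 := Nat.choose_eq_zero_of_lt (by omega)
  have h₂ : (n - i - 1).choose (i - 1) = 0 := Nat.choose_eq_zero_of_lt (by omega)
  simp [revDicksonCoeff, h₁, h₂, show i ≠ 0 by omega]

lemma revDicksonCoeff_one {n : ℕ} (hn : 1 ≤ n) : revDicksonCoeff k n 1 = n - k := by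
  obtain ⟨m, rfl⟩ : ∃ m, n = m + 1 := ⟨n - 1, by omega⟩
  rw [revDicksonCoeff, if_neg one_ne_zero, Nat.add_sub_cancel, Nat.choose_one_right,
    Nat.choose_zero_right]
  push_cast; ring

lemma revDicksonCoeff_add_two_succ {n j : ℕ} (hj : j < n) :
    revDicksonCoeff k (n + 2) (j + 1) =
      revDicksonCoeff k (n + 1) (j + 1) + revDicksonCoeff k n j := by
  rcases j with _ | j
  · rw [revDicksonCoeff_one k (by omega), revDicksonCoeff_one k (by omega), revDicksonCoeff_zero]
    push_cast; ring
  obtain ⟨m, rfl⟩ : ∃ m, n = j + 1 + 1 + m := ⟨n - (j + 2), by omega⟩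
  simp only [revDicksonCoeff, show j + 1 + 1 + m + 2 - (j + 1 + 1) = m + 1 + 1 by omega,
    show j + 1 + 1 + m + 1 - (j + 1 + 1) = m + 1 by omega,
    show j + 1 + 1 + m - (j + 1) = m + 1 by omega, Nat.add_sub_cancel, Nat.succ_ne_zero,
    if_false, Nat.choose_succ_succ (m + 1) (j + 1), Nat.choose_succ_succ m j]
  push_cast; ring

lemma revDickson_zero (a x : F) : revDickson k 0 a x = ((2 - k : ℤ) : F) := if_pos rfl

lemma revDickson_one_eq_sum {n : ℕ} (hn : n ≠ 0) (x : F) :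
    revDickson k n 1 x = ∑ i ∈ range (n / 2 + 1), (revDicksonCoeff k n i : F) * (-x) ^ i := by
  simp [revDickson, hn, revDicksonCoeff]

lemma revDickson_one_one (x : F) : revDickson k 1 1 x = 1 := by
  simp [revDickson_one_eq_sum k one_ne_zero, revDicksonCoeff_zero]

lemma revDickson_one_eq_sum_range {n N : ℕ} (hn : 2 ≤ n) (hN : n / 2 < N) (x : F) :
    revDickson k n 1 x = ∑ i ∈ range N, (revDicksonCoeff k n i : F) * (-x) ^ i := by
  rw [revDickson_one_eq_sum k (by omega), eventually_constant_sum (fun i hi => ?_) hN]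
  simp [revDicksonCoeff_eq_zero k hn (show n / 2 < i by omega)]

lemma revDickson_one_add_two (n : ℕ) (x : F) :
    revDickson k (n + 2) 1 x = revDickson k (n + 1) 1 x - x * revDickson k n 1 x := by
  rcases Nat.eq_zero_or_pos n with rfl | hn
  · rw [revDickson_one_eq_sum k two_ne_zero, revDickson_one_one, revDickson_zero, sum_range_succ,
      sum_range_one, revDicksonCoeff_zero, revDicksonCoeff_one k one_le_two]
    push_cast; ring
  rw [revDickson_one_eq_sum k (show n + 2 ≠ 0 by omega),
    show (n + 2) / 2 + 1 = n / 2 + 1 + 1 by omega,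
    revDickson_one_eq_sum_range k (show 2 ≤ n + 1 by omega)
      (show (n + 1) / 2 < n / 2 + 1 + 1 by omega),
    revDickson_one_eq_sum k (show n ≠ 0 by omega),
    sum_range_succ' (fun i => (revDicksonCoeff k (n + 2) i : F) * (-x) ^ i),
    sum_range_succ' (fun i => (revDicksonCoeff k (n + 1) i : F) * (-x) ^ i),
    revDicksonCoeff_zero, revDicksonCoeff_zero, mul_sum, add_sub_right_comm, ← sum_sub_distrib]
  congr 1
  refine sum_congr rfl fun j hj => ?_
  rw [revDicksonCoeff_add_two_succ k (show j < n by rw [mem_range] at hj; omega)]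
  push_cast; ring

theorem two_mul_sub_one_mul_revDickson (n : ℕ) (y : F) :
    (2 * y - 1) * revDickson k n 1 (y * (1 - y)) =
      ((k - 1) - (k - 2) * y) * y ^ n - (1 + (k - 2) * y) * (1 - y) ^ n := by
  induction n using Nat.twoStepInduction with
  | zero => rw [revDickson_zero]; push_cast; ring
  | one => rw [revDickson_one_one]; ring
  | more n ih₀ ih₁ =>
    rw [revDickson_one_add_two]
    linear_combination ih₁ - y * (1 - y) * ih₀

theorem revDickson_one_quarter (h2 : (2 : F) ≠ 0) (n : ℕ) :
    revDickson k n 1 (1 / 4 : F) = ((k * n - k + 2 : ℤ) : F) / 2 ^ n := by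
  induction n using Nat.twoStepInduction with
  | zero => rw [revDickson_zero]; push_cast; ring
  | one => rw [revDickson_one_one]; push_cast; field_simp; ring
  | more n ih₀ ih₁ =>
    have h4 : (4 : F) ≠ 0 := by
      rw [show (4 : F) = 2 * 2 by norm_num]; exact mul_ne_zero h2 h2
    rw [revDickson_one_add_two, ih₀, ih₁]
    field_simp
    push_cast
    ring

theorem map_revDickson {K : Type*} [Field K] (g : F →+* K) (n : ℕ) (a x : F) :
    g (revDickson k n a x) = revDickson k n (g a) (g x) := by
  unfold revDickson
  split_ifs <;> simp only [map_intCast, map_sum, map_mul, map_pow, map_neg, map_sub, map_one]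

theorem bijective_revDickson_iff_injOn_range {K : Type*} [Field K] [Finite F] (g : F →+* K)
    (n : ℕ) :
    Function.Bijective (fun x : F => revDickson k n 1 x) ↔
      Set.InjOn (revDickson k n 1) (Set.range g) := by
  rw [← Finite.injective_iff_bijective, ← g.injective.of_comp_iff]
  have hcomm : g ∘ (fun x => revDickson k n 1 x) = revDickson k n 1 ∘ g :=
    funext fun x => by simp [map_revDickson]
  rw [hcomm]
  exact ⟨Function.Injective.injOn_range, fun h => (h.injective_iff _ subset_rfl).mpr g.injective⟩

end revDickson

theorem mul_one_sub_eq_mul_one_sub_iff {R : Type*} [CommRing R] [IsDomain R] {a b : R} :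
    a * (1 - a) = b * (1 - b) ↔ a = b ∨ a = 1 - b := by
  have h : a * (1 - a) - b * (1 - b) = -((a - b) * (a - (1 - b))) := by ring
  rw [← sub_eq_zero, h, neg_eq_zero, mul_eq_zero, sub_eq_zero, sub_eq_zero]

theorem mul_one_sub_eq_quarter_iff {F : Type*} [Field F] (h2 : (2 : F) ≠ 0) {y : F} :
    y * (1 - y) = 1 / 4 ↔ y = 1 / 2 := by
  have h : y * (1 - y) - 1 / 4 = -(y - 1 / 2) ^ 2 := by
    rw [show (1 / 4 : F) = (1 / 2) ^ 2 by norm_num]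
    linear_combination (-y) * mul_inv_cancel₀ h2
  rw [← sub_eq_zero, h, neg_eq_zero, pow_eq_zero_iff two_ne_zero, sub_eq_zero]

namespace FiniteField

variable {K L : Type*} [Field K] [Field L] [Fintype K] [Fintype L] [Algebra K L]

theorem pow_card_eq_self_iff_mem_range {z : L} :
    z ^ Fintype.card K = z ↔ z ∈ (algebraMap K L).range := by
  refine ⟨fun hz => (IsGalois.mem_range_algebraMap_iff_fixed z).mpr fun σ => ?_, ?_⟩
  · obtain ⟨m, rfl⟩ := (bijective_frobeniusAlgEquivOfAlgebraic_pow K L).2 σ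
    rw [AlgEquiv.coe_pow, coe_frobeniusAlgEquivOfAlgebraic]
    exact Function.iterate_fixed hz m
  · rintro ⟨a, rfl⟩
    rw [← map_pow, pow_card]

theorem mul_one_sub_mem_range {y : L}
    (hy : y ∈ (algebraMap K L).range ∨ y ^ Fintype.card K = 1 - y) :
    y * (1 - y) ∈ (algebraMap K L).range := by
  rcases hy with ⟨a, rfl⟩ | hy
  · exact ⟨a * (1 - a), by simp⟩
  · rw [← pow_card_eq_self_iff_mem_range, ← frobeniusAlgHom_apply, map_mul, map_sub, map_one,
      frobeniusAlgHom_apply, hy]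
    ring

theorem isSquare_algebraMap (hL : Fintype.card L = Fintype.card K ^ 2) (h2 : ringChar L ≠ 2)
    (c : K) : IsSquare (algebraMap K L c) := by
  rcases eq_or_ne c 0 with rfl | hc
  · simp
  obtain ⟨t, ht⟩ : Odd (Fintype.card K) := by
    have := odd_card_of_char_ne_two h2
    rw [hL, Nat.pow_mod] at this
    rcases Nat.mod_two_eq_zero_or_one (Fintype.card K) with h | h <;> simp_all [Nat.odd_iff]
  have hexp : Fintype.card L / 2 = (Fintype.card K - 1) * (t + 1) := by
    rw [hL, ht, show (2 * t + 1) ^ 2 = 2 * (2 * t * (t + 1)) + 1 by ring, Nat.mul_add_div two_pos]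
    simp [mul_assoc]
  rw [isSquare_iff h2 (by simpa using hc), hexp, pow_mul, ← map_pow,
    pow_card_sub_one_eq_one c hc, map_one, one_pow]

theorem exists_mul_one_sub_eq_algebraMap (hL : Fintype.card L = Fintype.card K ^ 2)
    (h2 : ringChar L ≠ 2) (c : K) :
    ∃ y : L, (y ∈ (algebraMap K L).range ∨ y ^ Fintype.card K = 1 - y) ∧
      y * (1 - y) = algebraMap K L c := by
  have h2' : (2 : L) ≠ 0 := Ring.two_ne_zero h2
  obtain ⟨s, hs⟩ := isSquare_algebraMap hL h2 (1 - 4 * c)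
  simp only [map_sub, map_one, map_mul, map_ofNat] at hs
  -- `y` is a root of `Y ^ 2 - Y + c`, hence so is its conjugate `y ^ q`.
  set y : L := (1 + s) / 2
  have hy₂ : 2 * y = 1 + s := mul_div_cancel₀ _ h2'
  have hy : y * (1 - y) = algebraMap K L c := by
    refine mul_left_cancel₀ (mul_ne_zero h2' h2') ?_
    linear_combination hs - (s + 2 * y - 1) * hy₂
  refine ⟨y, ?_, hy⟩
  have hconj : y ^ Fintype.card K * (1 - y ^ Fintype.card K) = y * (1 - y) := by
    have h := pow_card_eq_self_iff_mem_range.mpr ⟨c, hy.symm⟩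
    rwa [← frobeniusAlgHom_apply, map_mul, map_sub, map_one, frobeniusAlgHom_apply] at h
  rw [← pow_card_eq_self_iff_mem_range]
  exact mul_one_sub_eq_mul_one_sub_iff.mp hconj

end FiniteField

namespace Set

theorem injOn_iff_of_mapsTo_of_surjOn {α β γ : Type*} {G : α → β} {A : Set α} {a₀ : α}
    {φ : γ → α} {F : γ → β} {s : Set γ} (ha₀ : a₀ ∈ A) (hmaps : MapsTo φ s (A \ {a₀}))
    (hsurj : SurjOn φ s (A \ {a₀})) (hF : EqOn F (G ∘ φ) s) :
    InjOn G A ↔ (∀ y₁ ∈ s, ∀ y₂ ∈ s, F y₁ = F y₂ → φ y₁ = φ y₂) ∧ ∀ y ∈ s, F y ≠ G a₀ := by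
  constructor
  · intro hG
    refine ⟨fun y₁ h₁ y₂ h₂ h => hG (hmaps h₁).1 (hmaps h₂).1 ?_, fun y hy h => ?_⟩
    · rwa [hF h₁, hF h₂] at h
    · exact (hmaps hy).2 (hG (hmaps hy).1 ha₀ (by rwa [hF hy] at h))
  · rintro ⟨hfib, hne⟩ a ha b hb hab
    have hlift : ∀ c ∈ A, c ≠ a₀ → ∃ y ∈ s, φ y = c ∧ F y = G c := fun c hc hc₀ => by
      obtain ⟨y, hy, rfl⟩ := hsurj ⟨hc, hc₀⟩
      exact ⟨y, hy, rfl, hF hy⟩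
    rcases eq_or_ne a a₀ with rfl | ha₀ <;> rcases eq_or_ne b a with rfl | hba
    · rfl
    · obtain ⟨y, hy, rfl, hFy⟩ := hlift b hb hba
      exact absurd (hFy.trans hab.symm) (hne y hy)
    · rfl
    rcases eq_or_ne b a₀ with rfl | hb₀
    · obtain ⟨y, hy, rfl, hFy⟩ := hlift a ha ha₀
      exact absurd (hFy.trans hab) (hne y hy)
    obtain ⟨y₁, hy₁, rfl, hF₁⟩ := hlift a ha ha₀
    obtain ⟨y₂, hy₂, rfl, hF₂⟩ := hlift b hb hb₀
    exact hfib y₁ hy₁ y₂ hy₂ (by rw [hF₁, hF₂, hab])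

end Set

theorem stmt_13_general {K L : Type*} [Field K] [Field L] [Fintype K] [Fintype L] [Algebra K L]
    {p : ℕ} [CharP L p] (h3 : 3 < p)
    (q : ℕ) (hq : Fintype.card K = q) (hL : Fintype.card L = q ^ 2)
    (k : ℤ) (n : ℕ)
    (S : Set L) (hS : S = {y : L | (y ∈ (algebraMap K L).range ∨ y ^ q = 1 - y) ∧ y ≠ 1 / 2})
    (f : L → L)
    (hf : ∀ y : L, f y = ((((k : L) - 1) - ((k : L) - 2) * y) * y ^ n
        - (1 + ((k : L) - 2) * y) * (1 - y) ^ n) / (2 * y - 1)) :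
    Function.Bijective (fun x : K => revDickson k n 1 x) ↔
      ((∀ y₁ ∈ S, ∀ y₂ ∈ S, f y₁ = f y₂ → y₁ = y₂ ∨ y₁ = 1 - y₂) ∧
        ∀ y ∈ S, f y ≠ ((k * n - k + 2 : ℤ) : L) / 2 ^ n) := by
  subst hq
  have h2 : ringChar L ≠ 2 := by rw [ringChar.eq L p]; omega
  have h2' : (2 : L) ≠ 0 := Ring.two_ne_zero h2
  rw [bijective_revDickson_iff_injOn_range k (algebraMap K L),
    Set.injOn_iff_of_mapsTo_of_surjOn (A := Set.range (algebraMap K L)) (a₀ := 1 / 4)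
      (φ := fun y => y * (1 - y)) (F := f) (s := S) ⟨1 / 4, by rw [map_div₀, map_one, map_ofNat]⟩
      ?maps ?surj ?eq,
    revDickson_one_quarter k h2']
  · simp only [mul_one_sub_eq_mul_one_sub_iff]
  case maps =>
    intro y hy
    rw [hS] at hy
    exact ⟨FiniteField.mul_one_sub_mem_range hy.1, (mul_one_sub_eq_quarter_iff h2').not.mpr hy.2⟩
  case surj =>
    rintro _ ⟨⟨c, rfl⟩, hc⟩
    obtain ⟨y, hy, hyc⟩ := FiniteField.exists_mul_one_sub_eq_algebraMap hL h2 c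
    exact ⟨y, hS ▸ ⟨hy, fun hy₂ => hc (hyc.symm.trans ((mul_one_sub_eq_quarter_iff h2').mpr hy₂))⟩,
      hyc⟩
  case eq =>
    intro y hy
    rw [hS] at hy
    have hden : 2 * y - 1 ≠ 0 := fun h => hy.2 (by rw [eq_div_iff h2']; linear_combination h)
    rw [hf, div_eq_iff hden, Function.comp_apply, ← two_mul_sub_one_mul_revDickson, mul_comm]

theorem stmt_13 {K L : Type*} [Field K] [Field L] [Fintype K] [Fintype L] [Algebra K L]
    {p e : ℕ} [CharP L p] (hp : p.Prime) (h3 : 3 < p)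
    (q : ℕ) (hq : Fintype.card K = q) (hqe : q = p ^ e) (hL : Fintype.card L = q ^ 2)
    (k : ℤ) (n : ℕ)
    (S : Set L) (hS : S = {y : L | (y ∈ (algebraMap K L).range ∨ y ^ q = 1 - y) ∧ y ≠ 1 / 2})
    (f : L → L)
    (hf : ∀ y : L, f y = ((((k : L) - 1) - ((k : L) - 2) * y) * y ^ n
        - (1 + ((k : L) - 2) * y) * (1 - y) ^ n) / (2 * y - 1)) :
    Function.Bijective (fun x : K => revDickson k n 1 x) ↔
      ((∀ y₁ ∈ S, ∀ y₂ ∈ S, f y₁ = f y₂ → y₁ = y₂ ∨ y₁ = 1 - y₂) ∧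
        ∀ y ∈ S, f y ≠ ((k * n - k + 2 : ℤ) : L) / 2 ^ n) :=
  stmt_13_general h3 q hq hL k n S hS f hf
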